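/- Let X̃₁ and X̃₂ be strong fuzzy incidence graphs without isolated vertices, and let D₁ and D₂ be strong incidence dominating sets of X̃₁ and X̃₂ respectively. Then D₁ × V₂ and V₁ × D₂ are strong incidence dominating sets of the tensor product X̃ = X̃₁ ⋄ X̃₂, and γ_IS(X̃) ≤ min{W(D₁ × V₂), W(V₁ × D₂)}. -/

import Mathlib

open scoped BigOperators

/-- A fuzzy incidence graph on a finite vertex type `V`.  An (undirected, loopless) edge `xy`
is encoded by the symmetric membership function `rho`, and the incidence pair `(x, xy)`
is encoded by `eta x y` (so `eta x y` is the membership value of the pair consisting of the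
vertex `x` and the edge joining `x` and `y`). All membership values lie in `[0,1]`,
`rho xy ≤ min (eps x) (eps y)` and `eta (x, xy) ≤ min (eps x) (rho xy)`. -/
structure FIG (V : Type) [Fintype V] [DecidableEq V] where
  eps : V → ℝ
  rho : V → V → ℝ
  eta : V → V → ℝ
  eps_nonneg : ∀ x, 0 ≤ eps x
  eps_le_one : ∀ x, eps x ≤ 1
  rho_nonneg : ∀ x y, 0 ≤ rho x y
  rho_symm : ∀ x y, rho x y = rho y x
  rho_le : ∀ x y, rho x y ≤ min (eps x) (eps y)
  rho_irrefl : ∀ x, rho x x = 0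
  eta_nonneg : ∀ x y, 0 ≤ eta x y
  eta_le : ∀ x y, eta x y ≤ min (eps x) (rho x y)

namespace FIG

variable {V V₁ V₂ : Type} [Fintype V] [DecidableEq V]
  [Fintype V₁] [DecidableEq V₁] [Fintype V₂] [DecidableEq V₂]

/-- `(x, xy)` is a pair of the fuzzy incidence graph (i.e. belongs to the support `η*`). -/
def IsPair (G : FIG V) (x y : V) : Prop := 0 < G.eta x y

/-- the minimum of the two pair weights along one edge step of an incidence path -/
def pairMin (G : FIG V) (a b : V) : ℝ := min (G.eta a b) (G.eta b a)

/-- the minimum of the pair weights along the internal steps of a vertex list -/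
def chainStrength (G : FIG V) : List V → ℝ
  | [] => 1
  | [_] => 1
  | a :: b :: l => min (G.pairMin a b) (G.chainStrength (b :: l))

/-- The set of incidence strengths of incidence paths from the vertex `x` to the edge `yz`:
a path is recorded by its (pairwise distinct) sequence of vertices, starting at `x` and ending
at an endpoint of the edge `yz`; its strength is the minimum of the weights of its pairs
(pairs of weight `0` are not genuine pairs, but a list using them has strength `0`, so
including such lists does not alter the supremum below). -/
def pathStrengths (G : FIG V) (x y z : V) : Set ℝ :=
  {s | ∃ l : List V, l.Nodup ∧ l.head? = some x ∧
      ((l.getLast? = some y ∧ s = min (G.chainStrength l) (G.eta y z)) ∨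
       (l.getLast? = some z ∧ s = min (G.chainStrength l) (G.eta z y)))}

/-- `ICONN G x y z` is the greatest incidence strength of an incidence path from the
vertex `x` to the edge `yz` (the incidence connectivity `ICONN_G (x, yz)`). -/
noncomputable def ICONN (G : FIG V) (x y z : V) : ℝ := sSup (G.pathStrengths x y z)

/-- the fuzzy incidence graph obtained by deleting the pair `(a, ab)` -/
def deletePair (G : FIG V) (a b : V) : FIG V where
  eps := G.eps
  rho := G.rho
  eta := fun u v => if u = a ∧ v = b then 0 else G.eta u v
  eps_nonneg := G.eps_nonneg
  eps_le_one := G.eps_le_one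
  rho_nonneg := G.rho_nonneg
  rho_symm := G.rho_symm
  rho_le := G.rho_le
  rho_irrefl := G.rho_irrefl
  eta_nonneg := by
    intro u v; (try dsimp only); split
    · exact le_refl 0
    · exact G.eta_nonneg u v
  eta_le := by
    intro u v; (try dsimp only); split
    · exact le_min (G.eps_nonneg u) (G.rho_nonneg u v)
    · exact G.eta_le u v

/-- The pair `(x, xy)` is strong: its weight is at least the incidence connectivity
between `x` and the edge `xy` in the graph obtained by deleting the pair `(x, xy)`. -/
def IsStrongPair (G : FIG V) (x y : V) : Prop :=
  (G.deletePair x y).ICONN x x y ≤ G.eta x y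

/-- a strong fuzzy incidence graph: every pair is strong -/
def Strong (G : FIG V) : Prop := ∀ x y, G.IsPair x y → G.IsStrongPair x y

/-- The pair `(x, xy)` is effective: `η(x, xy) = min (ε x) (ρ xy)`. -/
def EffectivePair (G : FIG V) (x y : V) : Prop :=
  G.eta x y = min (G.eps x) (G.rho x y)

/-- a fuzzy incidence graph in which every pair is effective -/
def EffectivePairs (G : FIG V) : Prop := ∀ x y, G.IsPair x y → G.EffectivePair x y

/-- `x` is a strong incidence neighbour of `y`: both `(x, xy)` and `(y, xy)` are
(genuine) strong pairs. -/
def SIN (G : FIG V) (x y : V) : Prop :=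
  G.IsPair x y ∧ G.IsPair y x ∧ G.IsStrongPair x y ∧ G.IsStrongPair y x

/-- a strong incidence dominating set (SIDS) -/
def SIDS (G : FIG V) (D : Finset V) : Prop :=
  ∀ x, x ∉ D → ∃ y ∈ D, G.SIN x y

/-- the contribution of a vertex `x` to the weight of a dominating set: the minimum
weight of a strong pair `(x, xy)` with `y` a strong incidence neighbour of `x` -/
noncomputable def vertexWeight (G : FIG V) (x : V) : ℝ :=
  sInf {w | ∃ y, G.SIN x y ∧ w = G.eta x y}

/-- the weight `W(D)` of a strong incidence dominating set -/
noncomputable def weight (G : FIG V) (D : Finset V) : ℝ :=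
  ∑ x ∈ D, G.vertexWeight x

/-- the strong incidence domination number `γ_IS`: the least weight of a SIDS -/
noncomputable def gammaIS (G : FIG V) : ℝ :=
  sInf {w | ∃ D : Finset V, G.SIDS D ∧ w = G.weight D}

/-- a minimum strong incidence dominating set -/
def MinSIDS (G : FIG V) (D : Finset V) : Prop :=
  G.SIDS D ∧ G.weight D = G.gammaIS

/-- a complete fuzzy incidence graph: every two distinct vertices are joined by an edge,
every edge has weight `min (eps x) (eps y)`, and every pair on an edge is effective -/
def Complete (G : FIG V) : Prop :=
  (∀ x, 0 < G.eps x) ∧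
  (∀ x y, x ≠ y → 0 < G.rho x y) ∧
  (∀ x y, x ≠ y → G.rho x y = min (G.eps x) (G.eps y)) ∧
  (∀ x y, 0 < G.rho x y → G.eta x y = min (G.eps x) (G.rho x y))

/-- The tensor product of two fuzzy incidence graphs: `(a₁,b₁)(a₂,b₂)` is an edge when
`a₁a₂ ∈ E₁` and `b₁b₂ ∈ E₂`; a pair of the product exists when all four corresponding
pairs of the factors exist, with weight `min (η₁ (a₁,a₁a₂)) (η₂ (b₁,b₁b₂))`. -/
noncomputable def tensor (G₁ : FIG V₁) (G₂ : FIG V₂) : FIG (V₁ × V₂) where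
  eps := fun p => min (G₁.eps p.1) (G₂.eps p.2)
  rho := fun p q => min (G₁.rho p.1 q.1) (G₂.rho p.2 q.2)
  eta := fun p q =>
    if 0 < G₁.eta p.1 q.1 ∧ 0 < G₁.eta q.1 p.1 ∧ 0 < G₂.eta p.2 q.2 ∧ 0 < G₂.eta q.2 p.2
    then min (G₁.eta p.1 q.1) (G₂.eta p.2 q.2) else 0
  eps_nonneg := fun p => le_min (G₁.eps_nonneg p.1) (G₂.eps_nonneg p.2)
  eps_le_one := fun p => min_le_of_left_le (G₁.eps_le_one p.1)
  rho_nonneg := fun p q => le_min (G₁.rho_nonneg _ _) (G₂.rho_nonneg _ _)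
  rho_symm := fun p q => by
    (try dsimp only); rw [G₁.rho_symm p.1 q.1, G₂.rho_symm p.2 q.2]
  rho_le := by
    intro p q; (try dsimp only)
    refine le_min (le_min (min_le_of_left_le ?_) (min_le_of_right_le ?_))
      (le_min (min_le_of_left_le ?_) (min_le_of_right_le ?_))
    · exact le_trans (G₁.rho_le p.1 q.1) (min_le_left _ _)
    · exact le_trans (G₂.rho_le p.2 q.2) (min_le_left _ _)
    · exact le_trans (G₁.rho_le p.1 q.1) (min_le_right _ _)
    · exact le_trans (G₂.rho_le p.2 q.2) (min_le_right _ _)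
  rho_irrefl := by
    intro p; (try dsimp only)
    rw [G₁.rho_irrefl, G₂.rho_irrefl]
    exact min_self 0
  eta_nonneg := by
    intro p q; (try dsimp only); split
    · exact le_min (G₁.eta_nonneg _ _) (G₂.eta_nonneg _ _)
    · exact le_refl 0
  eta_le := by
    intro p q; (try dsimp only); split
    · refine le_min (le_min (min_le_of_left_le ?_) (min_le_of_right_le ?_))
        (le_min (min_le_of_left_le ?_) (min_le_of_right_le ?_))
      · exact le_trans (G₁.eta_le p.1 q.1) (min_le_left _ _)
      · exact le_trans (G₂.eta_le p.2 q.2) (min_le_left _ _)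
      · exact le_trans (G₁.eta_le p.1 q.1) (min_le_right _ _)
      · exact le_trans (G₂.eta_le p.2 q.2) (min_le_right _ _)
    · exact le_min (le_min (G₁.eps_nonneg _) (G₂.eps_nonneg _))
        (le_min (G₁.rho_nonneg _ _) (G₂.rho_nonneg _ _))

/-! A path in the tensor product from `(a,b)` to `(y,z)` that avoids the pair
`((a,b), (a,b)(y,z))` projects, in each factor, to a walk from `a` to `y` (resp. `b` to `z`) whose
steps are at least as strong. If `(a, ay)` is strong, such a walk is bounded by `η(a, ay)`: either
it runs through the edge `ay`, or it shortcuts to a path of the factor with `(a, ay)` deleted.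
So strong incidence neighbours in both factors give strong incidence neighbours in the product,
and `D₁ × V₂` dominates because every vertex of the second factor has a neighbour. -/

theorem _root_.Relation.ReflTransGen.exists_nodup_isChain {α : Type*} {r : α → α → Prop}
    (sym : Std.Symm r) {a b : α} (h : Relation.ReflTransGen r a b) :
    ∃ l : List α, l.Nodup ∧ l.head? = some a ∧ l.getLast? = some b ∧ l.IsChain r := by
  rw [← SimpleGraph.reachable_fromEdgeSet_fromRel_eq_reflTransGen sym] at h
  obtain ⟨p, hp⟩ := h.exists_isPath
  refine ⟨p.support, hp.support_nodup, ?_, ?_, ?_⟩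
  · simp [List.head?_eq_some_head p.support_ne_nil]
  · simp [List.getLast?_eq_some_getLast p.support_ne_nil]
  · exact p.isChain_adj_support.imp fun u v huv =>
      Sym2.fromRel_prop.1 ((SimpleGraph.fromEdgeSet_adj _).1 huv).1

theorem _root_.List.relationReflTransGen_of_head?_getLast? {α : Type*} {r : α → α → Prop}
    {a b : α} {l : List α} (hl : l.IsChain r) (ha : l.head? = some a)
    (hb : l.getLast? = some b) : Relation.ReflTransGen r a b := by
  obtain _ | ⟨x, l⟩ := l
  · simp at ha
  · obtain rfl : x = a := by simpa using ha
    exact List.relationReflTransGen_of_exists_isChain_cons l hl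
      (by simpa [List.getLast?_eq_some_getLast] using hb)

theorem IsPair.ne {G : FIG V} {x y : V} (h : G.IsPair x y) : x ≠ y := by
  rintro rfl
  have := (G.eta_le x x).trans (min_le_right _ _)
  rw [G.rho_irrefl] at this
  exact this.not_gt h

theorem SIN.symm {G : FIG V} {x y : V} (h : G.SIN x y) : G.SIN y x :=
  ⟨h.2.1, h.1, h.2.2.2, h.2.2.1⟩

theorem pairMin_comm (G : FIG V) (a b : V) : G.pairMin a b = G.pairMin b a :=
  min_comm _ _

theorem chainStrength_le_one (G : FIG V) : ∀ l : List V, G.chainStrength l ≤ 1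
  | [] | [_] => le_rfl
  | _ :: b :: l => min_le_of_right_le (chainStrength_le_one G (b :: l))

theorem le_chainStrength_iff (G : FIG V) {c : ℝ} (hc : c ≤ 1) :
    ∀ l : List V, c ≤ G.chainStrength l ↔ l.IsChain (fun u v => c ≤ G.pairMin u v)
  | [] | [_] => by simp [chainStrength, hc]
  | a :: b :: l => by
    rw [chainStrength, le_min_iff, le_chainStrength_iff G hc (b :: l), List.isChain_cons_cons]

theorem bddAbove_pathStrengths (G : FIG V) (x y z : V) : BddAbove (G.pathStrengths x y z) :=
  ⟨1, by
    rintro s ⟨l, -, -, ⟨-, rfl⟩ | ⟨-, rfl⟩⟩ <;>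
      exact min_le_of_left_le (G.chainStrength_le_one l)⟩

theorem min_le_ICONN_of_reflTransGen (G : FIG V) {c : ℝ} (hc : c ≤ 1) {x y z : V}
    (h : Relation.ReflTransGen (fun u v => c ≤ G.pairMin u v) x z) :
    min c (G.eta z y) ≤ G.ICONN x y z := by
  have sym : Std.Symm fun u v => c ≤ G.pairMin u v :=
    ⟨fun u v huv => (G.pairMin_comm u v) ▸ huv⟩
  obtain ⟨l, hnd, hx, hz, hl⟩ := h.exists_nodup_isChain sym
  calc min c (G.eta z y) ≤ min (G.chainStrength l) (G.eta z y) :=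
        min_le_min_right _ ((G.le_chainStrength_iff hc l).2 hl)
    _ ≤ G.ICONN x y z :=
        le_csSup (G.bddAbove_pathStrengths x y z) ⟨l, hnd, hx, Or.inr ⟨hz, rfl⟩⟩

theorem deletePair_eta_self (G : FIG V) (a b : V) : (G.deletePair a b).eta a b = 0 :=
  if_pos ⟨rfl, rfl⟩

theorem deletePair_eta_of_ne (G : FIG V) {a b u v : V} (h : (u, v) ≠ (a, b)) :
    (G.deletePair a b).eta u v = G.eta u v :=
  if_neg fun ⟨hu, hv⟩ => h (Prod.ext hu hv)

theorem deletePair_eta_le (G : FIG V) (a b u v : V) : (G.deletePair a b).eta u v ≤ G.eta u v := by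
  by_cases h : (u, v) = (a, b)
  · obtain ⟨rfl, rfl⟩ := Prod.ext_iff.1 h
    rw [deletePair_eta_self]
    exact G.eta_nonneg u v
  · exact (G.deletePair_eta_of_ne h).le

theorem IsStrongPair.min_le_eta {G : FIG V} {a y : V} (hay : a ≠ y) (h : G.IsStrongPair a y)
    {c : ℝ} (hc : c ≤ 1) (hwalk : Relation.ReflTransGen (fun u v => c ≤ G.pairMin u v) a y) :
    min c (G.eta y a) ≤ G.eta a y := by
  by_contra! hlt
  -- every step of strength `≥ c > η(a, ay)` avoids the edge `ay`, so it survives the deletion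
  have hstep : ∀ u v, c ≤ G.pairMin u v → c ≤ (G.deletePair a y).pairMin u v := by
    intro u v huv
    have hpair : G.pairMin a y < c :=
      (min_le_left _ _).trans_lt (hlt.trans_le (min_le_left _ _))
    have hu : (u, v) ≠ (a, y) := by
      rintro ⟨⟩
      exact hpair.not_ge huv
    have hv : (v, u) ≠ (a, y) := by
      rintro ⟨⟩
      exact hpair.not_ge (G.pairMin_comm a y ▸ huv)
    rwa [pairMin, G.deletePair_eta_of_ne hu, G.deletePair_eta_of_ne hv]
  have hICONN := (G.deletePair a y).min_le_ICONN_of_reflTransGen (y := a) hc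
    (Relation.ReflTransGen.mono hstep _ _ hwalk)
  have hya : (y, a) ≠ (a, y) := fun h => hay (Prod.ext_iff.1 h).2
  rw [G.deletePair_eta_of_ne hya] at hICONN
  exact (hICONN.trans h).not_gt hlt

theorem tensor_eta_le_fst (G₁ : FIG V₁) (G₂ : FIG V₂) (p q : V₁ × V₂) :
    (G₁.tensor G₂).eta p q ≤ G₁.eta p.1 q.1 := by
  show ite _ _ _ ≤ _
  split
  · exact min_le_left _ _
  · exact G₁.eta_nonneg _ _

theorem tensor_eta_le_snd (G₁ : FIG V₁) (G₂ : FIG V₂) (p q : V₁ × V₂) :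
    (G₁.tensor G₂).eta p q ≤ G₂.eta p.2 q.2 := by
  show ite _ _ _ ≤ _
  split
  · exact min_le_right _ _
  · exact G₂.eta_nonneg _ _

theorem tensor_eta_of_SIN {G₁ : FIG V₁} {G₂ : FIG V₂} {a y : V₁} {b z : V₂}
    (h₁ : G₁.SIN a y) (h₂ : G₂.SIN b z) :
    (G₁.tensor G₂).eta (a, b) (y, z) = min (G₁.eta a y) (G₂.eta b z) :=
  if_pos ⟨h₁.1, h₁.2.1, h₂.1, h₂.2.1⟩

theorem tensor_isStrongPair {G₁ : FIG V₁} {G₂ : FIG V₂} {a y : V₁} {b z : V₂}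
    (h₁ : G₁.SIN a y) (h₂ : G₂.SIN b z) : (G₁.tensor G₂).IsStrongPair (a, b) (y, z) := by
  set T' := (G₁.tensor G₂).deletePair (a, b) (y, z)
  refine Real.sSup_le ?_ ((G₁.tensor G₂).eta_nonneg _ _)
  rintro s ⟨l, -, hhead, ⟨-, rfl⟩ | ⟨hlast, rfl⟩⟩
  · rw [deletePair_eta_self]
    exact (min_le_right _ _).trans ((G₁.tensor G₂).eta_nonneg _ _)
  set c := T'.chainStrength l
  have hc : c ≤ 1 := T'.chainStrength_le_one l
  have hwalk : Relation.ReflTransGen (fun p q => c ≤ T'.pairMin p q) (a, b) (y, z) :=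
    List.relationReflTransGen_of_head?_getLast?
      ((T'.le_chainStrength_iff hc l).1 le_rfl) hhead hlast
  have hle₁ (p q : V₁ × V₂) : T'.eta p q ≤ G₁.eta p.1 q.1 :=
    (deletePair_eta_le _ _ _ _ _).trans (tensor_eta_le_fst _ _ _ _)
  have hle₂ (p q : V₁ × V₂) : T'.eta p q ≤ G₂.eta p.2 q.2 :=
    (deletePair_eta_le _ _ _ _ _).trans (tensor_eta_le_snd _ _ _ _)
  have hwalk₁ : Relation.ReflTransGen (fun u v => c ≤ G₁.pairMin u v) a y :=
    hwalk.lift Prod.fst fun p q h => h.trans (min_le_min (hle₁ p q) (hle₁ q p))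
  have hwalk₂ : Relation.ReflTransGen (fun u v => c ≤ G₂.pairMin u v) b z :=
    hwalk.lift Prod.snd fun p q h => h.trans (min_le_min (hle₂ p q) (hle₂ q p))
  rw [tensor_eta_of_SIN h₁ h₂]
  exact le_min
    ((min_le_min_left c (hle₁ _ _)).trans
      (h₁.2.2.1.min_le_eta h₁.1.ne hc hwalk₁))
    ((min_le_min_left c (hle₂ _ _)).trans
      (h₂.2.2.1.min_le_eta h₂.1.ne hc hwalk₂))

theorem SIN.tensor {G₁ : FIG V₁} {G₂ : FIG V₂} {a y : V₁} {b z : V₂}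
    (h₁ : G₁.SIN a y) (h₂ : G₂.SIN b z) : (G₁.tensor G₂).SIN (a, b) (y, z) := by
  refine ⟨?_, ?_, tensor_isStrongPair h₁ h₂, tensor_isStrongPair h₁.symm h₂.symm⟩
  · rw [IsPair, tensor_eta_of_SIN h₁ h₂]
    exact lt_min h₁.1 h₂.1
  · rw [IsPair, tensor_eta_of_SIN h₁.symm h₂.symm]
    exact lt_min h₁.2.1 h₂.2.1

theorem SIDS.prod_univ {G₁ : FIG V₁} {G₂ : FIG V₂} {D₁ : Finset V₁} (hD₁ : G₁.SIDS D₁)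
    (hiso₂ : ∀ x : V₂, ∃ y, G₂.SIN x y) :
    (G₁.tensor G₂).SIDS (D₁ ×ˢ (Finset.univ : Finset V₂)) := by
  rintro ⟨x₁, x₂⟩ hx
  obtain ⟨y₁, hy₁, h₁⟩ := hD₁ x₁ fun h => hx (Finset.mem_product.2 ⟨h, Finset.mem_univ _⟩)
  obtain ⟨y₂, h₂⟩ := hiso₂ x₂
  exact ⟨(y₁, y₂), Finset.mem_product.2 ⟨hy₁, Finset.mem_univ _⟩, h₁.tensor h₂⟩

theorem SIDS.univ_prod {G₁ : FIG V₁} {G₂ : FIG V₂} {D₂ : Finset V₂}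
    (hiso₁ : ∀ x : V₁, ∃ y, G₁.SIN x y) (hD₂ : G₂.SIDS D₂) :
    (G₁.tensor G₂).SIDS ((Finset.univ : Finset V₁) ×ˢ D₂) := by
  rintro ⟨x₁, x₂⟩ hx
  obtain ⟨y₂, hy₂, h₂⟩ := hD₂ x₂ fun h => hx (Finset.mem_product.2 ⟨Finset.mem_univ _, h⟩)
  obtain ⟨y₁, h₁⟩ := hiso₁ x₁
  exact ⟨(y₁, y₂), Finset.mem_product.2 ⟨Finset.mem_univ _, hy₂⟩, h₁.tensor h₂⟩

theorem vertexWeight_nonneg (G : FIG V) (x : V) : 0 ≤ G.vertexWeight x :=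
  Real.sInf_nonneg fun _ ⟨y, _, hw⟩ => hw ▸ G.eta_nonneg x y

theorem gammaIS_le_weight {G : FIG V} {D : Finset V} (hD : G.SIDS D) :
    G.gammaIS ≤ G.weight D :=
  csInf_le ⟨0, fun _ ⟨_, _, hw⟩ => hw ▸ Finset.sum_nonneg fun x _ => G.vertexWeight_nonneg x⟩
    ⟨D, hD, rfl⟩

theorem tensor_SIDS_prod_general (G₁ : FIG V₁) (G₂ : FIG V₂)
    (hiso₁ : ∀ x : V₁, ∃ y, G₁.SIN x y) (hiso₂ : ∀ x : V₂, ∃ y, G₂.SIN x y)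
    (D₁ : Finset V₁) (D₂ : Finset V₂) (hD₁ : G₁.SIDS D₁) (hD₂ : G₂.SIDS D₂) :
    (G₁.tensor G₂).SIDS (D₁ ×ˢ (Finset.univ : Finset V₂)) ∧
    (G₁.tensor G₂).SIDS ((Finset.univ : Finset V₁) ×ˢ D₂) ∧
    (G₁.tensor G₂).gammaIS ≤
      min ((G₁.tensor G₂).weight (D₁ ×ˢ (Finset.univ : Finset V₂)))
        ((G₁.tensor G₂).weight ((Finset.univ : Finset V₁) ×ˢ D₂)) := by
  have hS₁ := hD₁.prod_univ hiso₂
  have hS₂ := hD₂.univ_prod hiso₁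
  exact ⟨hS₁, hS₂, le_min (gammaIS_le_weight hS₁) (gammaIS_le_weight hS₂)⟩

/-- **Theorem 34.** If `D₁`, `D₂` are strong incidence dominating sets of the strong
fuzzy incidence graphs `G₁`, `G₂` without isolated vertices, then `D₁ × V₂` and
`V₁ × D₂` are strong incidence dominating sets of the tensor product, and the strong
incidence domination number of the tensor product is at most
`min (W (D₁ × V₂)) (W (V₁ × D₂))`. -/
theorem tensor_SIDS_prod (G₁ : FIG V₁) (G₂ : FIG V₂)
    (h₁ : G₁.Strong) (h₂ : G₂.Strong)
    (hiso₁ : ∀ x : V₁, ∃ y, G₁.SIN x y) (hiso₂ : ∀ x : V₂, ∃ y, G₂.SIN x y)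
    (D₁ : Finset V₁) (D₂ : Finset V₂) (hD₁ : G₁.SIDS D₁) (hD₂ : G₂.SIDS D₂) :
    (G₁.tensor G₂).SIDS (D₁ ×ˢ (Finset.univ : Finset V₂)) ∧
    (G₁.tensor G₂).SIDS ((Finset.univ : Finset V₁) ×ˢ D₂) ∧
    (G₁.tensor G₂).gammaIS ≤
      min ((G₁.tensor G₂).weight (D₁ ×ˢ (Finset.univ : Finset V₂)))
        ((G₁.tensor G₂).weight ((Finset.univ : Finset V₁) ×ˢ D₂)) :=
  tensor_SIDS_prod_general G₁ G₂ hiso₁ hiso₂ D₁ D₂ hD₁ hD₂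

end FIG
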